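/- The ring homomorphism φ: ℤ[x₂,x₃,x₄,x₄',x₅,x₆,x₈] → ℤ[b₂,b₃,b₄,b₈]/(4b₈+b₄²−b₂b₃²) sending x₂↦2b₂, x₃↦b₃, x₄↦b₂², x₄'↦b₄, x₅↦b₂b₃, x₆↦b₂b₄, x₈↦b₈ has image equal to the subring generated by 2b₂, b₃, b₄, b₂², b₂b₃, b₂b₄, b₈, and this image does not contain b₂. -/

import Mathlib

open MvPolynomial

noncomputable def jFIdeal : Ideal (MvPolynomial (Fin 4) ℤ) :=
  Ideal.span {4 * X 3 + (X 2) ^ 2 - X 0 * (X 1) ^ 2}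

noncomputable abbrev jF : Type := MvPolynomial (Fin 4) ℤ ⧸ jFIdeal

noncomputable def b2 : jF := Ideal.Quotient.mk jFIdeal (X 0)
noncomputable def b3 : jF := Ideal.Quotient.mk jFIdeal (X 1)
noncomputable def b4 : jF := Ideal.Quotient.mk jFIdeal (X 2)
noncomputable def b8 : jF := Ideal.Quotient.mk jFIdeal (X 3)

/-- `φ : ℤ[x₂,x₃,x₄,x₄',x₅,x₆,x₈] → jF`, `x₂↦2b₂, x₃↦b₃, x₄↦b₂², x₄'↦b₄, x₅↦b₂b₃,
x₆↦b₂b₄, x₈↦b₈`; variables: `x₂ = X 0`, `x₃ = X 1`, `x₄ = X 2`, `x₄' = X 3`,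
`x₅ = X 4`, `x₆ = X 5`, `x₈ = X 6`. -/
noncomputable def φ : MvPolynomial (Fin 7) ℤ →+* jF :=
  (MvPolynomial.aeval
    ![2 * b2, b3, b2 ^ 2, b4, b2 * b3, b2 * b4, b8] :
      MvPolynomial (Fin 7) ℤ →ₐ[ℤ] jF).toRingHom

/-- Auxiliary map to the dual numbers over `𝔽₂`: `b₂ ↦ ε`, `b₃, b₄, b₈ ↦ 0`. -/
noncomputable def fDN : jF →ₐ[ℤ] DualNumber (ZMod 2) :=
  Ideal.Quotient.liftₐ jFIdeal (aeval ![DualNumber.eps, 0, 0, 0]) (by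
    intro a ha
    rw [jFIdeal, Ideal.mem_span_singleton] at ha
    obtain ⟨c, rfl⟩ := ha
    simp)

lemma two_eq_zero_DN : (2 : DualNumber (ZMod 2)) = 0 := by
  rw [show (2 : DualNumber (ZMod 2)) = 1 + 1 from one_add_one_eq_two.symm,
    ← TrivSqZeroExt.inl_one, ← TrivSqZeroExt.inl_add,
    show (1 + 1 : ZMod 2) = 0 from rfl, TrivSqZeroExt.inl_zero]

lemma fDN_b2 : fDN b2 = DualNumber.eps := by simp [fDN, b2]; exact (Ideal.Quotient.lift_mk _ _ _).trans (by simp)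
lemma fDN_b3 : fDN b3 = 0 := by simp [fDN, b3]; exact (Ideal.Quotient.lift_mk _ _ _).trans (by simp)
lemma fDN_b4 : fDN b4 = 0 := by simp [fDN, b4]; exact (Ideal.Quotient.lift_mk _ _ _).trans (by simp)
lemma fDN_b8 : fDN b8 = 0 := by simp [fDN, b8]; exact (Ideal.Quotient.lift_mk _ _ _).trans (by simp)

lemma fDN_gen (i : Fin 7) : fDN (![2 * b2, b3, b2 ^ 2, b4, b2 * b3, b2 * b4, b8] i) = 0 := by
  fin_cases i
  · show fDN (2 * b2) = 0
    rw [map_mul, map_ofNat, two_eq_zero_DN, zero_mul]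
  · exact fDN_b3
  · show fDN (b2 ^ 2) = 0
    rw [map_pow, fDN_b2, sq, DualNumber.eps_mul_eps]
  · exact fDN_b4
  · show fDN (b2 * b3) = 0
    rw [map_mul, fDN_b3, mul_zero]
  · show fDN (b2 * b4) = 0
    rw [map_mul, fDN_b4, mul_zero]
  · exact fDN_b8

lemma φ_X (i : Fin 7) : φ (X i) = ![2 * b2, b3, b2 ^ 2, b4, b2 * b3, b2 * b4, b8] i := by
  simp [φ]

/-- The image of `φ` is the subring of `jF` generated by
`2b₂, b₃, b₄, b₂², b₂b₃, b₂b₄, b₈`, and this image does not contain `b₂`. -/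
theorem stmt13 :
    φ.range = Subring.closure {2 * b2, b3, b4, b2 ^ 2, b2 * b3, b2 * b4, b8} ∧
    b2 ∉ φ.range := by
  constructor
  · apply le_antisymm
    · rintro x ⟨p, rfl⟩
      induction p using MvPolynomial.induction_on with
      | C a =>
        have : φ (C a) = (a : jF) := by simp [φ]
        rw [this]
        exact intCast_mem _ a
      | add p q hp hq => rw [map_add]; exact Subring.add_mem _ hp hq
      | mul_X p i hp =>
        rw [map_mul]
        refine Subring.mul_mem _ hp ?_
        rw [φ_X]
        refine Subring.subset_closure ?_
        fin_cases i
        · show 2 * b2 ∈ _; simp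
        · show b3 ∈ _; simp
        · show b2 ^ 2 ∈ _; simp
        · show b4 ∈ _; simp
        · show b2 * b3 ∈ _; simp
        · show b2 * b4 ∈ _; simp
        · show b8 ∈ _; simp
    · rw [Subring.closure_le]
      rintro x hx
      simp only [Set.mem_insert_iff, Set.mem_singleton_iff] at hx
      rcases hx with rfl | rfl | rfl | rfl | rfl | rfl | rfl
      · exact ⟨X 0, by rw [φ_X]; rfl⟩
      · exact ⟨X 1, by rw [φ_X]; rfl⟩
      · exact ⟨X 3, by rw [φ_X]; rfl⟩
      · exact ⟨X 2, by rw [φ_X]; rfl⟩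
      · exact ⟨X 4, by rw [φ_X]; rfl⟩
      · exact ⟨X 5, by rw [φ_X]; rfl⟩
      · exact ⟨X 6, by rw [φ_X]; rfl⟩
  · rintro ⟨p, hp⟩
    have h := congrArg fDN hp
    rw [fDN_b2] at h
    have hφ : φ p = (aeval ![2 * b2, b3, b2 ^ 2, b4, b2 * b3, b2 * b4, b8]) p := rfl
    rw [hφ, comp_aeval_apply] at h
    have hz : (fun i => fDN (![2 * b2, b3, b2 ^ 2, b4, b2 * b3, b2 * b4, b8] i)) =
        (fun _ => (0 : DualNumber (ZMod 2))) := funext fDN_gen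
    rw [hz, aeval_zero'] at h
    have hsnd := congrArg TrivSqZeroExt.snd h
    rw [DualNumber.snd_eps] at hsnd
    have : (algebraMap ℤ (DualNumber (ZMod 2)) (constantCoeff p)).snd = 0 := by
      rw [eq_intCast, TrivSqZeroExt.snd_intCast]
    rw [this] at hsnd
    exact one_ne_zero hsnd.symm
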